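/- arXiv:1803.01042 — 2 statements merged into one kernel-verified Lean document; each statement's English description precedes it below -/
import Mathlib

section
/- Let g : ℝ → [0,∞) be integrable, let m be a probability measure on ℝ, and let Φ ≥ 0. Then the quantity S(Φ, m) = 1 - exp(-Φ - ∫g) - ∫ g(s) exp(-∫_s^∞ g(t)dt) exp(-Φ·m([s,∞))) ds satisfies S(Φ, m) ≤ 1 - exp(-Φ). -/
/-!
The tail mass `F s = ∫_{[s,∞)} g` is absolutely continuous with `F' = -g` a.e., hence so is
`exp (-F)`, with derivative `g * exp (-F)`; the fundamental theorem of calculus for absolutely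
continuous functions then gives `∫ g * exp (-F) = 1 - exp (-∫ g)`. As `m` is a probability
measure and `Φ ≥ 0`, the shading weight `exp (-Φ * m [s,∞))` is at least `exp (-Φ)`, so the
shaded integral is at least `exp (-Φ) * (1 - exp (-∫ g))`, which is exactly the amount by which
`1 - exp (-Φ - ∫ g)` exceeds `1 - exp (-Φ)`.
-/

open MeasureTheory

/-- The pointwise integrand of the shaded sunlight functional: `Φ` is the projected
density, `m` the disintegration measure along the line, and `g` the density of the
shading measure along the line. -/
noncomputable def shadedSun (g : ℝ → ℝ) (Φ : ℝ) (m : Measure ℝ) : ℝ :=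
  1 - Real.exp (-(Φ + ∫ t, g t)) -
    ∫ s, g s * Real.exp (-(∫ t in Set.Ici s, g t)) *
      Real.exp (-(Φ * (m (Set.Ici s)).toReal))

open Set Filter Topology AbsolutelyContinuousOnInterval
open scoped NNReal

section Composition

variable {X Y : Type*} [PseudoMetricSpace Y] {a b : ℝ}

theorem LipschitzOnWith.comp_absolutelyContinuousOnInterval [PseudoMetricSpace X]
    {φ : X → Y} {f : ℝ → X} {K : ℝ≥0} {s : Set X}
    (hφ : LipschitzOnWith K φ s) (hf : AbsolutelyContinuousOnInterval f a b)
    (hfs : MapsTo f (uIcc a b) s) : AbsolutelyContinuousOnInterval (φ ∘ f) a b := by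
  have hK : Tendsto (fun E : ℕ × (ℕ → ℝ × ℝ) =>
      K * ∑ i ∈ Finset.range E.1, dist (f (E.2 i).1) (f (E.2 i).2))
      (totalLengthFilter ⊓ 𝓟 (disjWithin a b)) (𝓝 0) := by
    simpa only [mul_zero] using Tendsto.const_mul (K : ℝ) hf
  refine squeeze_zero' (Eventually.of_forall fun E => Finset.sum_nonneg fun _ _ => dist_nonneg)
    ?_ hK
  filter_upwards [mem_inf_of_right (mem_principal_self _)] with E hE
  rw [Finset.mul_sum]
  exact Finset.sum_le_sum fun i hi =>
    hφ.dist_le_mul _ (hfs (hE.1 i hi).1) _ (hfs (hE.1 i hi).2)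

theorem LocallyLipschitz.comp_absolutelyContinuousOnInterval [SeminormedAddCommGroup X]
    {φ : X → Y} {f : ℝ → X} (hφ : LocallyLipschitz φ)
    (hf : AbsolutelyContinuousOnInterval f a b) :
    AbsolutelyContinuousOnInterval (φ ∘ f) a b := by
  have himage : IsCompact (f '' uIcc a b) :=
    isCompact_uIcc.image_of_continuousOn hf.uniformContinuousOn.continuousOn
  obtain ⟨K, hK⟩ := LocallyLipschitzOn.exists_lipschitzOnWith_of_compact himage
    hφ.locallyLipschitzOn
  exact hK.comp_absolutelyContinuousOnInterval hf (mapsTo_image f _)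

end Composition

section TailIntegral

variable {f : ℝ → ℝ}

theorem integral_Ici_eq_sub_intervalIntegral (hf : Integrable f) (c s : ℝ) :
    ∫ t in Ici s, f t = (∫ t in Ici c, f t) - ∫ t in c..s, f t := by
  simp only [integral_Ici_eq_integral_Ioi]
  rw [← intervalIntegral.integral_Ioi_sub_Ioi' hf.integrableOn hf.integrableOn, sub_sub_cancel]

theorem continuous_integral_Ici (hf : Integrable f) :
    Continuous fun s => ∫ t in Ici s, f t := by
  rw [funext (integral_Ici_eq_sub_intervalIntegral hf 0)]
  exact continuous_const.sub
    (intervalIntegral.continuous_primitive (fun _ _ => hf.intervalIntegrable) 0)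

theorem absolutelyContinuousOnInterval_integral_Ici (hf : Integrable f) (a b : ℝ) :
    AbsolutelyContinuousOnInterval (fun s => ∫ t in Ici s, f t) a b := by
  rw [funext (integral_Ici_eq_sub_intervalIntegral hf a)]
  exact ((LipschitzWith.const _).lipschitzOnWith.absolutelyContinuousOnInterval).sub
    (hf.intervalIntegrable.absolutelyContinuousOnInterval_intervalIntegral left_mem_uIcc)

theorem ae_hasDerivAt_integral_Ici (hf : Integrable f) :
    ∀ᵐ x, HasDerivAt (fun s => ∫ t in Ici s, f t) (-f x) x := by
  filter_upwards [LocallyIntegrable.ae_hasDerivAt_integral hf.locallyIntegrable] with x hx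
  rw [funext (integral_Ici_eq_sub_intervalIntegral hf 0)]
  exact (hx 0).const_sub _

theorem abs_integral_Ici_le (hf : Integrable f) (s : ℝ) :
    |∫ t in Ici s, f t| ≤ ∫ t, |f t| :=
  abs_integral_le_integral_abs.trans
    (setIntegral_le_integral hf.abs (ae_of_all _ fun _ => abs_nonneg _))

theorem MeasureTheory.Integrable.mul_exp_neg_integral_Ici (hf : Integrable f) :
    Integrable fun s => f s * Real.exp (-∫ t in Ici s, f t) := by
  refine hf.mul_bdd (c := Real.exp (∫ t, |f t|))
    (Real.continuous_exp.comp (continuous_integral_Ici hf).neg).aestronglyMeasurable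
    (ae_of_all _ fun s => ?_)
  rw [Real.norm_eq_abs, Real.abs_exp, Real.exp_le_exp]
  exact (neg_le_abs _).trans (abs_integral_Ici_le hf s)

theorem intervalIntegral_mul_exp_neg_integral_Ici (hf : Integrable f) (a b : ℝ) :
    ∫ s in a..b, f s * Real.exp (-∫ t in Ici s, f t) =
      Real.exp (-∫ t in Ici b, f t) - Real.exp (-∫ t in Ici a, f t) := by
  have hE : AbsolutelyContinuousOnInterval (fun s => Real.exp (-∫ t in Ici s, f t)) a b :=
    (Real.contDiff_exp.comp contDiff_neg).locallyLipschitz.comp_absolutelyContinuousOnInterval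
      (absolutelyContinuousOnInterval_integral_Ici hf a b)
  rw [← hE.integral_deriv_eq_sub]
  refine intervalIntegral.integral_congr_ae ?_
  filter_upwards [ae_hasDerivAt_integral_Ici hf] with x hx _
  rw [hx.fun_neg.exp.deriv, neg_neg, mul_comm]

theorem integral_mul_exp_neg_integral_Ici (hf : Integrable f) :
    ∫ s, f s * Real.exp (-∫ t in Ici s, f t) = 1 - Real.exp (-∫ t, f t) := by
  have htop : Tendsto (fun s => ∫ t in Ici s, f t) atTop (𝓝 0) := by
    simpa only [integral_Ici_eq_integral_Ioi] using
      tendsto_integral_Ioi_zero (b := fun s => s) tendsto_id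
  have hbot : Tendsto (fun s => ∫ t in Ici (-s), f t) atTop (𝓝 (∫ t, f t)) := by
    have hsum := (intervalIntegral_tendsto_integral hf tendsto_neg_atTop_atBot
      (b := fun s => s) tendsto_id).add htop
    rw [add_zero] at hsum
    refine hsum.congr fun s => ?_
    rw [integral_Ici_eq_sub_intervalIntegral hf (-s) s, add_sub_cancel]
  have hlim := intervalIntegral_tendsto_integral hf.mul_exp_neg_integral_Ici
    tendsto_neg_atTop_atBot (b := fun s => s) tendsto_id
  simp only [intervalIntegral_mul_exp_neg_integral_Ici hf] at hlim
  refine tendsto_nhds_unique hlim ?_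
  have hexp := (Real.continuous_exp.comp continuous_neg).tendsto
  simpa using ((hexp 0).comp htop).sub ((hexp _).comp hbot)

end TailIntegral

/-- The light absorbed in the presence of shading is at most the light absorbed
without shading: `S(Φ, m) ≤ 1 - exp (-Φ)`. -/
theorem stmt_10 (g : ℝ → ℝ) (hg : Integrable g) (hg0 : ∀ s, 0 ≤ g s)
    (Φ : ℝ) (hΦ : 0 ≤ Φ) (m : Measure ℝ) [IsProbabilityMeasure m] :
    shadedSun g Φ m ≤ 1 - Real.exp (-Φ) := by
  set w : ℝ → ℝ := fun s => Real.exp (-(Φ * (m (Ici s)).toReal))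
  have hw_meas : Measurable w := by
    have hanti : Antitone fun s => (m (Ici s)).toReal := fun _ _ hst =>
      ENNReal.toReal_mono (measure_ne_top m _) (measure_mono (Ici_subset_Ici.2 hst))
    exact (Real.continuous_exp.comp (continuous_const.mul continuous_id).neg).measurable.comp
      hanti.measurable
  have hw_le : ∀ s, w s ≤ 1 := fun s =>
    Real.exp_le_one_iff.2 (neg_nonpos.2 (mul_nonneg hΦ ENNReal.toReal_nonneg))
  have hw_ge : ∀ s, Real.exp (-Φ) ≤ w s := fun s =>
    Real.exp_le_exp.2 (neg_le_neg (mul_le_of_le_one_right hΦ measureReal_le_one))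
  have hint := hg.mul_exp_neg_integral_Ici
  have hshaded : Real.exp (-Φ) * (1 - Real.exp (-∫ t, g t)) ≤
      ∫ s, g s * Real.exp (-∫ t in Ici s, g t) * w s := by
    rw [← integral_mul_exp_neg_integral_Ici hg, ← integral_const_mul]
    refine integral_mono (hint.const_mul _) (hint.mul_bdd (c := 1) hw_meas.aestronglyMeasurable
      (ae_of_all _ fun s => ?_)) fun s => ?_
    · rw [Real.norm_eq_abs, abs_of_pos (Real.exp_pos _)]
      exact hw_le s
    · rw [mul_comm]
      exact mul_le_mul_of_nonneg_left (hw_ge s) (mul_nonneg (hg0 s) (Real.exp_pos _).le)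
  rw [shadedSun, neg_add, Real.exp_add]
  linarith
end

section
/- Let μ1, μ2 be finite positive measures on a compact set, with admissible irrigation plans χ1, χ2 of finite α-cost. Then the concatenated plan χ defined by χ(θ,t) = χ1(θ,t) for θ ∈ [0,κ1] and χ(θ,t) = χ2(θ-κ1,t) for θ ∈ (κ1, κ1+κ2] is an admissible irrigation plan for μ1 + μ2, and E^α(χ) ≤ E^α(χ1) + E^α(χ2). Consequently I^α(μ1+μ2) ≤ I^α(μ1) + I^α(μ2). -/
open MeasureTheory

/-- The flux `|x|_χ` of the irrigation plan `χ : [0,κ] × [0,1] → ℝ^d` through the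
point `x`: the measure of the set of particles passing through `x`. -/
noncomputable def flux (d : ℕ) (κ : ℝ) (χ : ℝ → ℝ → EuclideanSpace ℝ (Fin d))
    (x : EuclideanSpace ℝ (Fin d)) : ENNReal :=
  volume {θ | θ ∈ Set.Icc (0:ℝ) κ ∧ ∃ t ∈ Set.Icc (0:ℝ) 1, χ θ t = x}

/-- `χ` is an admissible irrigation plan for the measure `μ`, with total mass `κ`:
it is measurable, each particle path is Lipschitz, all particles start at the origin,
and the time-1 positions push the Lebesgue measure on `[0,κ]` forward to `μ`. -/
def IsPlan (d : ℕ) (κ : ℝ) (μ : Measure (EuclideanSpace ℝ (Fin d)))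
    (χ : ℝ → ℝ → EuclideanSpace ℝ (Fin d)) : Prop :=
  Measurable (Function.uncurry χ) ∧
    (∀ θ ∈ Set.Icc (0:ℝ) κ, ∃ L, LipschitzWith L (χ θ)) ∧
    (∀ θ ∈ Set.Icc (0:ℝ) κ, χ θ 0 = 0) ∧
    Measure.map (fun θ => χ θ 1) (volume.restrict (Set.Icc 0 κ)) = μ

/-- The `α`-cost `E^α(χ) = ∫_Θ ∫_0^1 |χ(θ,t)|_χ^{α-1} |χ_t(θ,t)| dt dθ`. -/
noncomputable def cost (d : ℕ) (a κ : ℝ) (χ : ℝ → ℝ → EuclideanSpace ℝ (Fin d)) : ENNReal :=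
  ∫⁻ θ in Set.Icc (0:ℝ) κ, ∫⁻ t in Set.Icc (0:ℝ) 1,
    flux d κ χ (χ θ t) ^ (a - 1) * ENNReal.ofReal ‖deriv (χ θ) t‖

/-- The minimal `α`-irrigation cost `I^α(μ)`. -/
noncomputable def irrCost (d : ℕ) (a κ : ℝ) (μ : Measure (EuclideanSpace ℝ (Fin d))) :
    ENNReal :=
  ⨅ (χ : ℝ → ℝ → EuclideanSpace ℝ (Fin d)) (_ : IsPlan d κ μ χ), cost d a κ χ

lemma rpow_anti {x y : ENNReal} {z : ℝ} (hxy : x ≤ y) (hz : z ≤ 0) : y ^ z ≤ x ^ z := by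
  have h : ∀ w : ENNReal, w ^ z = (w ^ (-z))⁻¹ := fun w => by
    rw [← ENNReal.rpow_neg, neg_neg]
  rw [h x, h y]
  exact ENNReal.inv_le_inv.2 (ENNReal.rpow_le_rpow hxy (neg_nonneg.2 hz))

/-- The concatenated plan is a plan for `μ1 + μ2` with cost at most the sum of costs. -/
lemma concat_plan (d : ℕ) (a κ1 κ2 : ℝ) (ha1 : a ≤ 1)
    (hκ1 : 0 ≤ κ1) (hκ2 : 0 ≤ κ2)
    (μ1 μ2 : Measure (EuclideanSpace ℝ (Fin d)))
    (χ1 χ2 : ℝ → ℝ → EuclideanSpace ℝ (Fin d))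
    (hχ1 : IsPlan d κ1 μ1 χ1) (hχ2 : IsPlan d κ2 μ2 χ2) :
    IsPlan d (κ1 + κ2) (μ1 + μ2)
        (fun θ t => if θ ≤ κ1 then χ1 θ t else χ2 (θ - κ1) t) ∧
      cost d a (κ1 + κ2) (fun θ t => if θ ≤ κ1 then χ1 θ t else χ2 (θ - κ1) t)
        ≤ cost d a κ1 χ1 + cost d a κ2 χ2 := by
  obtain ⟨hm1, hL1, h01, hmap1⟩ := hχ1
  obtain ⟨hm2, hL2, h02, hmap2⟩ := hχ2
  set χ : ℝ → ℝ → EuclideanSpace ℝ (Fin d) :=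
    fun θ t => if θ ≤ κ1 then χ1 θ t else χ2 (θ - κ1) t with hχdef
  have hχle : ∀ θ, θ ≤ κ1 → χ θ = χ1 θ := by
    intro θ hθ; funext t; simp [hχdef, hθ]
  have hχgt : ∀ θ, κ1 < θ → χ θ = χ2 (θ - κ1) := by
    intro θ hθ; funext t; simp [hχdef, not_le.2 hθ]
  -- measurability of uncurried χ
  have hmχ : Measurable (Function.uncurry χ) := by
    have : Function.uncurry χ = fun p : ℝ × ℝ =>
        if p.1 ≤ κ1 then Function.uncurry χ1 p else Function.uncurry χ2 (p.1 - κ1, p.2) := by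
      funext p; rcases p with ⟨θ, t⟩; simp [Function.uncurry, hχdef]
    rw [this]
    exact Measurable.ite (measurableSet_le measurable_fst measurable_const) hm1
      (hm2.comp ((measurable_fst.sub measurable_const).prodMk measurable_snd))
  -- flux monotonicity
  have hflux1 : ∀ x, flux d κ1 χ1 x ≤ flux d (κ1 + κ2) χ x := by
    intro x
    apply measure_mono
    rintro θ ⟨⟨h0, h1⟩, t, ht, hxt⟩
    exact ⟨⟨h0, by linarith⟩, t, ht, by rw [hχle θ h1]; exact hxt⟩
  have hflux2 : ∀ x, flux d κ2 χ2 x ≤ flux d (κ1 + κ2) χ x := by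
    intro x
    set T := {θ | θ ∈ Set.Icc (0:ℝ) (κ1 + κ2) ∧ ∃ t ∈ Set.Icc (0:ℝ) 1, χ θ t = x}
    set A := {θ | θ ∈ Set.Icc (0:ℝ) κ2 ∧ ∃ t ∈ Set.Icc (0:ℝ) 1, χ2 θ t = x}
    have hsub : A \ {0} ⊆ (fun θ => κ1 + θ) ⁻¹' T := by
      rintro θ ⟨⟨⟨h0, h2⟩, t, ht, hxt⟩, hne⟩
      have hθ0 : 0 < θ := lt_of_le_of_ne h0 (Ne.symm (by simpa using hne))
      simp only [Set.mem_preimage, Set.mem_setOf_eq, Set.mem_Icc, T]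
      refine ⟨⟨by linarith, by linarith⟩, t, ht, ?_⟩
      rw [hχgt (κ1 + θ) (by linarith)]
      simpa using hxt
    calc volume A ≤ volume ((A \ {0}) ∪ {0}) := measure_mono (by
            intro y hy; by_cases h : y = (0:ℝ) <;> simp [h, hy])
      _ ≤ volume (A \ {0}) + volume ({0} : Set ℝ) := measure_union_le _ _
      _ = volume (A \ {0}) := by simp
      _ ≤ volume ((fun θ => κ1 + θ) ⁻¹' T) := measure_mono hsub
      _ = volume T := measure_preimage_add volume κ1 T
  -- the pushforward measure
  have hIccU : Set.Icc (0:ℝ) κ1 ∪ Set.Ioc κ1 (κ1 + κ2) = Set.Icc 0 (κ1 + κ2) :=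
    Set.Icc_union_Ioc_eq_Icc hκ1 (by linarith)
  have hdisj : Disjoint (Set.Icc (0:ℝ) κ1) (Set.Ioc κ1 (κ1 + κ2)) := by
    rw [Set.disjoint_left]
    rintro θ ⟨_, h1⟩ ⟨h2, _⟩; exact absurd h1 (not_le.2 h2)
  have hrestr : (volume : Measure ℝ).restrict (Set.Icc 0 (κ1 + κ2))
      = volume.restrict (Set.Icc 0 κ1) + volume.restrict (Set.Ioc κ1 (κ1 + κ2)) := by
    rw [← hIccU, Measure.restrict_union hdisj measurableSet_Ioc]
  have hmf : Measurable (fun θ => χ θ 1) :=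
    hmχ.comp (measurable_id.prodMk measurable_const)
  -- translation equiv
  have hmap_trans : Measure.map (fun θ => θ + κ1) (volume.restrict (Set.Ioc 0 κ2))
      = volume.restrict (Set.Ioc κ1 (κ1 + κ2)) := by
    have hpre : (fun θ : ℝ => θ + κ1) ⁻¹' Set.Ioc κ1 (κ1 + κ2) = Set.Ioc 0 κ2 := by
      ext θ; simp only [Set.mem_preimage, Set.mem_Ioc]; constructor
      · rintro ⟨h1, h2⟩; exact ⟨by linarith, by linarith⟩
      · rintro ⟨h1, h2⟩; exact ⟨by linarith, by linarith⟩
    rw [← hpre, ← Measure.restrict_map (measurable_add_const κ1) measurableSet_Ioc,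
      map_add_right_eq_self volume κ1]
  have hmap : Measure.map (fun θ => χ θ 1) (volume.restrict (Set.Icc 0 (κ1 + κ2)))
      = μ1 + μ2 := by
    rw [hrestr, Measure.map_add _ _ hmf]
    congr 1
    · rw [← hmap1]
      apply Measure.map_congr
      filter_upwards [ae_restrict_mem measurableSet_Icc] with θ hθ
      rw [hχle θ hθ.2]
    · have h1 : Measure.map (fun θ => χ θ 1) (volume.restrict (Set.Ioc κ1 (κ1 + κ2)))
          = Measure.map (fun θ => χ2 (θ - κ1) 1) (volume.restrict (Set.Ioc κ1 (κ1 + κ2))) := by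
        apply Measure.map_congr
        filter_upwards [ae_restrict_mem measurableSet_Ioc] with θ hθ
        rw [hχgt θ hθ.1]
      have hg2 : Measurable (fun θ : ℝ => χ2 (θ - κ1) 1) :=
        hm2.comp ((measurable_sub_const κ1).prodMk measurable_const)
      rw [h1, ← hmap_trans, Measure.map_map hg2 (measurable_add_const κ1)]
      have hco : ((fun θ => χ2 (θ - κ1) 1) ∘ fun θ => θ + κ1) = fun θ => χ2 θ 1 := by
        funext θ; simp
      rw [hco, Measure.restrict_congr_set Ioc_ae_eq_Icc, hmap2]
  refine ⟨⟨hmχ, ?_, ?_, hmap⟩, ?_⟩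
  · intro θ ⟨h0, h2⟩
    by_cases h : θ ≤ κ1
    · rw [hχle θ h]; exact hL1 θ ⟨h0, h⟩
    · rw [hχgt θ (not_le.1 h)]
      exact hL2 (θ - κ1) ⟨by linarith [not_le.1 h], by linarith⟩
  · intro θ ⟨h0, h2⟩
    by_cases h : θ ≤ κ1
    · rw [hχle θ h]; exact h01 θ ⟨h0, h⟩
    · rw [hχgt θ (not_le.1 h)]
      exact h02 (θ - κ1) ⟨by linarith [not_le.1 h], by linarith⟩
  -- cost bound
  · unfold cost
    rw [← hIccU]
    refine le_trans (lintegral_union_le _ _ _) (add_le_add ?_ ?_)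
    · -- first piece
      apply lintegral_mono_ae
      filter_upwards [ae_restrict_mem measurableSet_Icc] with θ hθ
      apply lintegral_mono
      intro t
      rw [hχle θ hθ.2]
      exact mul_le_mul_left (rpow_anti (hflux1 (χ1 θ t)) (by linarith)) _
    · -- second piece
      have step1 : ∫⁻ θ in Set.Ioc κ1 (κ1 + κ2), ∫⁻ t in Set.Icc (0:ℝ) 1,
            flux d (κ1 + κ2) χ (χ θ t) ^ (a - 1) * ENNReal.ofReal ‖deriv (χ θ) t‖
          ≤ ∫⁻ θ in Set.Ioc κ1 (κ1 + κ2), ∫⁻ t in Set.Icc (0:ℝ) 1,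
            flux d κ2 χ2 (χ2 (θ - κ1) t) ^ (a - 1)
              * ENNReal.ofReal ‖deriv (χ2 (θ - κ1)) t‖ := by
        apply lintegral_mono_ae
        filter_upwards [ae_restrict_mem measurableSet_Ioc] with θ hθ
        apply lintegral_mono
        intro t
        rw [hχgt θ hθ.1]
        exact mul_le_mul_left (rpow_anti (hflux2 (χ2 (θ - κ1) t)) (by linarith)) _
      refine le_trans step1 ?_
      have step2 : ∫⁻ θ in Set.Ioc κ1 (κ1 + κ2), ∫⁻ t in Set.Icc (0:ℝ) 1,
            flux d κ2 χ2 (χ2 (θ - κ1) t) ^ (a - 1)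
              * ENNReal.ofReal ‖deriv (χ2 (θ - κ1)) t‖
          = ∫⁻ θ in Set.Ioc (0:ℝ) κ2, ∫⁻ t in Set.Icc (0:ℝ) 1,
            flux d κ2 χ2 (χ2 θ t) ^ (a - 1) * ENNReal.ofReal ‖deriv (χ2 θ) t‖ := by
        have he : Measure.map (MeasurableEquiv.addRight κ1) (volume.restrict (Set.Ioc 0 κ2))
            = volume.restrict (Set.Ioc κ1 (κ1 + κ2)) := hmap_trans
        rw [← he, lintegral_map_equiv]
        apply lintegral_congr
        intro θ
        simp [MeasurableEquiv.addRight]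
      rw [step2]
      exact lintegral_mono_set Set.Ioc_subset_Icc_self

/-- Concatenating admissible irrigation plans for `μ1` and `μ2` gives an admissible
plan for `μ1 + μ2` whose cost is at most the sum of the costs; consequently
`I^α(μ1 + μ2) ≤ I^α(μ1) + I^α(μ2)`. -/
theorem stmt_13 (d : ℕ) (a κ1 κ2 : ℝ) (ha0 : 0 < a) (ha1 : a ≤ 1)
    (hκ1 : 0 ≤ κ1) (hκ2 : 0 ≤ κ2)
    (μ1 μ2 : Measure (EuclideanSpace ℝ (Fin d)))
    (χ1 χ2 χ : ℝ → ℝ → EuclideanSpace ℝ (Fin d))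
    (hχ1 : IsPlan d κ1 μ1 χ1) (hχ2 : IsPlan d κ2 μ2 χ2)
    (hc1 : cost d a κ1 χ1 < ⊤) (hc2 : cost d a κ2 χ2 < ⊤)
    (hχ : χ = fun θ t => if θ ≤ κ1 then χ1 θ t else χ2 (θ - κ1) t) :
    IsPlan d (κ1 + κ2) (μ1 + μ2) χ ∧
      cost d a (κ1 + κ2) χ ≤ cost d a κ1 χ1 + cost d a κ2 χ2 ∧
      irrCost d a (κ1 + κ2) (μ1 + μ2) ≤ irrCost d a κ1 μ1 + irrCost d a κ2 μ2 := by
  subst hχ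
  obtain ⟨hplan, hcost⟩ := concat_plan d a κ1 κ2 ha1 hκ1 hκ2 μ1 μ2 χ1 χ2 hχ1 hχ2
  refine ⟨hplan, hcost, ?_⟩
  set A := irrCost d a κ1 μ1 with hAdef
  set B := irrCost d a κ2 μ2 with hBdef
  by_cases hA : A = ⊤
  · simp [hA]
  by_cases hB : B = ⊤
  · simp [hB]
  refine ENNReal.le_of_forall_pos_le_add fun ε hε _ => ?_
  have hε2 : (0 : ENNReal) < (ε : ENNReal) / 2 :=
    ENNReal.div_pos (by exact_mod_cast hε.ne') (by norm_num)
  have hAlt : A < A + (ε : ENNReal) / 2 := ENNReal.lt_add_right hA hε2.ne'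
  have hBlt : B < B + (ε : ENNReal) / 2 := ENNReal.lt_add_right hB hε2.ne'
  rw [hAdef, irrCost, iInf_lt_iff] at hAlt
  obtain ⟨π1, h1⟩ := hAlt
  rw [iInf_lt_iff] at h1
  obtain ⟨hπ1, hcost1⟩ := h1
  rw [hBdef, irrCost, iInf_lt_iff] at hBlt
  obtain ⟨π2, h2⟩ := hBlt
  rw [iInf_lt_iff] at h2
  obtain ⟨hπ2, hcost2⟩ := h2
  obtain ⟨hplanc, hcostc⟩ := concat_plan d a κ1 κ2 ha1 hκ1 hκ2 μ1 μ2 π1 π2 hπ1 hπ2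
  calc irrCost d a (κ1 + κ2) (μ1 + μ2)
      ≤ cost d a (κ1 + κ2) (fun θ t => if θ ≤ κ1 then π1 θ t else π2 (θ - κ1) t) :=
        iInf₂_le _ hplanc
    _ ≤ cost d a κ1 π1 + cost d a κ2 π2 := hcostc
    _ ≤ (A + (ε : ENNReal) / 2) + (B + (ε : ENNReal) / 2) :=
        add_le_add hcost1.le hcost2.le
    _ = A + B + ((ε : ENNReal) / 2 + (ε : ENNReal) / 2) := by ring
    _ = A + B + (ε : ENNReal) := by rw [ENNReal.add_halves]
end
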